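/- arXiv:1006.1095 — 3 statements merged into one kernel-verified Lean document; each statement's English description precedes it below -/
import Mathlib

section
/- Let (X, δ) be a diversity. Then (X, δ) is hyperconvex if and only if there is an isomorphism (a surjective embedding) between (X, δ) and its tight span (T_X, δ_T). -/
open scoped Classical

noncomputable section

/-- A diversity: axioms (D1) and (D2). -/
def IsDiversity {X : Type*} (δ : Finset X → ℝ) : Prop :=
  (∀ A, 0 ≤ δ A) ∧ (∀ A, δ A = 0 ↔ A.card ≤ 1) ∧
    ∀ A B C : Finset X, B ≠ ∅ → δ (A ∪ C) ≤ δ (A ∪ B) + δ (B ∪ C)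

/-- Membership in `P_X`: `f ∅ = 0` and `Σ_{A ∈ 𝓐} f A ≥ δ (⋃ 𝓐)` for every finite
collection `𝓐` of finite subsets of `X`. -/
def MemP {X : Type*} (δ : Finset X → ℝ) (f : Finset X → ℝ) : Prop :=
  f ∅ = 0 ∧ ∀ 𝓐 : Finset (Finset X), δ (𝓐.sup id) ≤ ∑ A ∈ 𝓐, f A

/-- Membership in the tight span `T_X`: the pointwise-minimal elements of `P_X`. -/
def MemT {X : Type*} (δ : Finset X → ℝ) (f : Finset X → ℝ) : Prop :=
  MemP δ f ∧ ∀ g : Finset X → ℝ, MemP δ g → (∀ A, g A ≤ f A) → g = f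

/-- The function `δ_T` on finite subsets of the tight span: `δ_T ∅ = 0` and for nonempty `F`,
`δ_T F = sup { δ(⋃𝓐) - Σ_{A ∈ 𝓐} inf_{f ∈ F} f A : 𝓐 a finite collection of finite subsets }`. -/
noncomputable def deltaT {X : Type*} (δ : Finset X → ℝ) (F : Finset (Finset X → ℝ)) : ℝ :=
  if F = ∅ then 0
  else sSup {r : ℝ | ∃ 𝓐 : Finset (Finset X),
    r = δ (𝓐.sup id) - ∑ A ∈ 𝓐, sInf ((fun f => f A) '' (F : Set (Finset X → ℝ)))}

/-- A hyperconvex diversity. -/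
def DivHyperconvex {X : Type*} (δ : Finset X → ℝ) : Prop :=
  ∀ r : Finset X → ℝ,
    (∀ 𝓐 : Finset (Finset X), δ (𝓐.sup id) ≤ ∑ A ∈ 𝓐, r A) →
    ∃ z : X, ∀ Y : Finset X, δ ({z} ∪ Y) ≤ r Y

/-!
If `δ` is hyperconvex, a tight function `g`, used as a family of radii, yields a point `z` with
`κ z ≤ g` where `κ z A = δ (insert z A)`; minimality forces `κ z = g`, so the map `κ`, which is
always an embedding into `T_X`, is onto.

Conversely hyperconvexity is transported along isomorphisms, so it suffices that `(T_X, δ_T)` is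
hyperconvex. For admissible radii `R` on `T_X`, Zorn gives a tight `G ≤ R` on the tight span of
`T_X`; its pull-back `h A = G (κ '' A)` is again tight and satisfies `δ_T ({h} ∪ F) ≤ G F`. Both
rest on two facts about `δ_T`: points of the form `κ a` can be absorbed into the set `A` they
come from, and `δ_T` satisfies (D2) through a tight function, which lets the `κ`-images be peeled
off one tight function at a time.
-/

open Finset

theorem Finset.image_sup_id {α β : Type*} [DecidableEq β] (𝓐 : Finset (Finset α)) (f : α → β) :
    (𝓐.sup id).image f = 𝓐.sup fun A => A.image f :=
  apply_sup_eq_sup_comp (fun A : Finset α => A.image f) (fun _ _ => image_union _ _)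
    (image_empty f)

namespace IsDiversity

variable {X : Type*} {δ : Finset X → ℝ}

theorem empty (hδ : IsDiversity δ) : δ ∅ = 0 := (hδ.2.1 ∅).2 (by simp)

theorem singleton (hδ : IsDiversity δ) (x : X) : δ {x} = 0 := (hδ.2.1 {x}).2 (by simp)

theorem le_union (hδ : IsDiversity δ) (A s : Finset X) : δ A ≤ δ (A ∪ s) := by
  induction s using Finset.induction_on with
  | empty => simp
  | insert x s _ ih =>
    have h := hδ.2.2 (A ∪ s) {x} ∅ (by simp)
    rw [union_empty, union_empty, hδ.singleton, union_comm (A ∪ s), ← insert_eq] at h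
    rw [union_insert]
    linarith

theorem mono (hδ : IsDiversity δ) {A B : Finset X} (h : A ⊆ B) : δ A ≤ δ B := by
  simpa [union_eq_right.2 h] using hδ.le_union A B

/-- The star inequality: (D2) once for each `C i`, through a point of `D`. -/
theorem union_sup_le (hδ : IsDiversity δ) {ι : Type*} (D : Finset X) (I : Finset ι)
    (C : ι → Finset X) (c : ι → ℝ) (h : ∀ i ∈ I, ∃ a ∈ D, δ (insert a (C i)) ≤ c i) :
    δ (D ∪ I.sup C) ≤ δ D + ∑ i ∈ I, c i := by
  induction I using Finset.induction_on with
  | empty => simp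
  | insert i I hi ih =>
    obtain ⟨a, haD, hac⟩ := h i (mem_insert_self i I)
    have ih := ih fun j hj => h j (mem_insert_of_mem hj)
    have htri := hδ.2.2 (D ∪ I.sup C) {a} (C i) (by simp)
    have haS : D ∪ I.sup C ∪ {a} = D ∪ I.sup C :=
      union_eq_left.2 (singleton_subset_iff.2 (mem_union_left _ haD))
    rw [haS, singleton_union] at htri
    rw [sup_insert, sum_insert hi, sup_eq_union, union_left_comm, union_comm (C i)]
    linarith

end IsDiversity

section TightFunctions

variable {Z : Type*} {b : Finset Z → ℝ} {f : Finset Z → ℝ}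

theorem MemP.le (hf : MemP b f) (A : Finset Z) : b A ≤ f A := by
  simpa using hf.2 {A}

theorem MemP.nonneg (hb : ∀ A, 0 ≤ b A) (hf : MemP b f) (A : Finset Z) : 0 ≤ f A :=
  (hb A).trans (hf.le A)

theorem MemP.sup_le_sum (hb : ∀ A, 0 ≤ b A) (hf : MemP b f) {ι : Type*} (I : Finset ι)
    (C : ι → Finset Z) : b (I.sup C) ≤ ∑ i ∈ I, f (C i) := by
  have h := hf.2 (I.image C)
  rw [sup_image] at h
  exact h.trans (sum_image_le_of_nonneg fun A _ => hf.nonneg hb A)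

theorem MemP.union_sup_le (hb : ∀ A, 0 ≤ b A) (hf : MemP b f) (D : Finset Z) {ι : Type*}
    (I : Finset ι) (C : ι → Finset Z) : b (D ∪ I.sup C) ≤ f D + ∑ i ∈ I, f (C i) := by
  simpa [sup_disjSum, sum_disjSum] using
    hf.sup_le_sum hb (({()} : Finset Unit).disjSum I) (Sum.elim (fun _ => D) C)

/-- Otherwise `f A` could be lowered by `ε` without leaving `P`. -/
theorem MemT.exists_add_sum_le (hb : ∀ A, 0 ≤ b A) (hf : MemT b f) (A : Finset Z) {ε : ℝ}
    (hε : 0 < ε) : ∃ 𝓐 : Finset (Finset Z), f A + ∑ B ∈ 𝓐, f B ≤ b (A ∪ 𝓐.sup id) + ε := by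
  by_contra! hslack
  have hA : A ≠ ∅ := by
    rintro rfl
    have := hslack ∅
    simp only [hf.1.1, sum_empty, sup_empty] at this
    linarith [hb (∅ ∪ ⊥)]
  have hg : MemP b (Function.update f A (f A - ε)) := by
    refine ⟨by rw [Function.update_of_ne (Ne.symm hA), hf.1.1], fun 𝓐 => ?_⟩
    by_cases hA𝓐 : A ∈ 𝓐
    · have hsup : 𝓐.sup id = A ∪ (𝓐.erase A).sup id := by
        conv_lhs => rw [← insert_erase hA𝓐]
        rw [sup_insert, id, sup_eq_union]
      rw [sum_update_of_mem hA𝓐, ← erase_eq, hsup]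
      linarith [hslack (𝓐.erase A)]
    · rw [sum_update_of_notMem hA𝓐]
      exact hf.1.2 𝓐
  have := congrFun (hf.2 _ hg fun B => by
    rcases eq_or_ne B A with rfl | hB
    · simp [hε.le]
    · rw [Function.update_of_ne hB]) A
  simp only [Function.update_self] at this
  linarith

theorem memT_of_forall_exists_add_sum_le (hb : ∀ A, 0 ≤ b A) (hf : MemP b f)
    (h : ∀ A : Finset Z, ∀ ε > 0, ∃ 𝓐 : Finset (Finset Z),
      f A + ∑ B ∈ 𝓐, f B ≤ b (A ∪ 𝓐.sup id) + ε) : MemT b f := by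
  refine ⟨hf, fun g hg hgf => funext fun A => le_antisymm (hgf A) ?_⟩
  refine le_of_forall_pos_le_add fun ε hε => ?_
  obtain ⟨𝓐, h𝓐⟩ := h A ε hε
  have hcov := hg.union_sup_le hb A 𝓐 id
  have hsum : ∑ B ∈ 𝓐, g B ≤ ∑ B ∈ 𝓐, f B := sum_le_sum fun B _ => hgf B
  simp only [id] at hcov
  linarith

theorem memP_update_empty {r : Finset Z → ℝ}
    (hr : ∀ 𝓐 : Finset (Finset Z), b (𝓐.sup id) ≤ ∑ A ∈ 𝓐, r A) :
    MemP b (Function.update r ∅ 0) := by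
  refine ⟨Function.update_self .., fun 𝓐 => ?_⟩
  have hsup : (𝓐.erase ∅).sup id = 𝓐.sup id := sup_erase_bot 𝓐
  rw [← sum_erase (f := Function.update r ∅ 0) 𝓐 (Function.update_self ..), ← hsup]
  refine (hr _).trans (le_of_eq (sum_congr rfl fun A hA => ?_))
  rw [Function.update_of_ne (ne_of_mem_erase hA)]

theorem exists_memP_le_of_isChain {c : Set (Finset Z → ℝ)}
    (hcP : ∀ g ∈ c, MemP b g) (hc : IsChain (· ≤ ·) c) (hne : c.Nonempty) :
    ∃ g, MemP b g ∧ ∀ f ∈ c, g ≤ f := by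
  obtain ⟨y, hy⟩ := hne
  have hbdd : ∀ A, BddBelow ((· A) '' c) := fun A =>
    ⟨b A, by rintro _ ⟨g, hg, rfl⟩; exact (hcP g hg).le A⟩
  set g₀ : Finset Z → ℝ := fun A => sInf ((· A) '' c)
  have hg₀ : ∀ f ∈ c, g₀ ≤ f := fun f hf A => csInf_le (hbdd A) ⟨f, hf, rfl⟩
  have hg₀_empty : g₀ ∅ = 0 := le_antisymm ((hg₀ y hy ∅).trans (hcP y hy).1.le)
    (le_csInf (Set.Nonempty.image _ ⟨y, hy⟩) (by rintro _ ⟨g, hg, rfl⟩; exact (hcP g hg).1.ge))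
  refine ⟨g₀, ⟨hg₀_empty, fun 𝓐 => ?_⟩, hg₀⟩
  refine le_of_forall_pos_le_add fun ε hε => ?_
  set ε' := ε / (#𝓐 + 1)
  have hsel : ∀ A, ∃ g ∈ c, g A < g₀ A + ε' := fun A => by
    obtain ⟨_, ⟨g, hg, rfl⟩, hlt⟩ :=
      exists_lt_of_csInf_lt (Set.Nonempty.image _ ⟨y, hy⟩)
        (lt_add_of_pos_right (g₀ A) (show 0 < ε' by positivity))
    exact ⟨g, hg, hlt⟩
  choose sel hselc hsellt using hsel
  -- a chain is directed, so the finitely many approximants have a common lower bound in it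
  have : Nonempty c := ⟨⟨y, hy⟩⟩
  have hc' : IsChain (· ≥ ·) c := fun _ hf _ hg hfg => (hc hf hg hfg).symm
  obtain ⟨⟨g, hg⟩, hgle⟩ := hc'.directedOn.directed_val.finset_le
    (𝓐.image fun A => (⟨sel A, hselc A⟩ : c))
  have hcard : (#𝓐 : ℝ) * ε' ≤ ε := by
    calc (#𝓐 : ℝ) * ε' ≤ (#𝓐 + 1) * ε' := by gcongr; linarith
      _ = ε := mul_div_cancel₀ ε (by positivity)
  calc b (𝓐.sup id) ≤ ∑ A ∈ 𝓐, g A := (hcP g hg).2 𝓐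
    _ ≤ ∑ A ∈ 𝓐, (g₀ A + ε') :=
      sum_le_sum fun A hA => (hgle _ (mem_image_of_mem _ hA) A).trans (hsellt A).le
    _ = ∑ A ∈ 𝓐, g₀ A + #𝓐 * ε' := by rw [sum_add_distrib, sum_const, nsmul_eq_mul]
    _ ≤ ∑ A ∈ 𝓐, g₀ A + ε := by linarith

theorem exists_memT_le (hf : MemP b f) : ∃ g, MemT b g ∧ g ≤ f := by
  have hchain : ∀ c ⊆ {g : (Finset Z → ℝ)ᵒᵈ | MemP b (OrderDual.ofDual g)},
      IsChain (· ≤ ·) c → ∀ y ∈ c, ∃ lb ∈ {g | MemP b (OrderDual.ofDual g)}, ∀ g ∈ c, g ≤ lb :=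
    fun c hcP hc y hy => exists_memP_le_of_isChain hcP hc.symm ⟨y, hy⟩
  obtain ⟨m, hmf, hm⟩ := zorn_le_nonempty₀ _ hchain (OrderDual.toDual f) hf
  exact ⟨OrderDual.ofDual m, ⟨hm.prop, fun g hg hgm => le_antisymm hgm (hm.2 hg hgm)⟩, hmf⟩

end TightFunctions

section DeltaT

variable {X : Type*} {δ : Finset X → ℝ}

def kappa (δ : Finset X → ℝ) (x : X) : Finset X → ℝ := fun A => δ (insert x A)

theorem kappa_self (hδ : IsDiversity δ) (x : X) : kappa δ x {x} = 0 := by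
  simp [kappa, hδ.singleton]

theorem IsDiversity.union_sup_le_of_mem_image_kappa (hδ : IsDiversity δ) (D : Finset X)
    {ι : Type*} (I : Finset ι) (C : ι → Finset X) (m : ι → Finset X → ℝ)
    (hm : ∀ i ∈ I, m i ∈ D.image (kappa δ)) :
    δ (D ∪ I.sup C) ≤ δ D + ∑ i ∈ I, m i (C i) :=
  hδ.union_sup_le D I C _ fun i hi => by
    obtain ⟨a, ha, hma⟩ := mem_image.1 (hm i hi)
    exact ⟨a, ha, by rw [← hma]; exact le_rfl⟩

theorem kappa_memP (hδ : IsDiversity δ) (x : X) : MemP δ (kappa δ x) := by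
  refine ⟨by simp [kappa, hδ.singleton], fun 𝓐 => ?_⟩
  have h := hδ.union_sup_le_of_mem_image_kappa {x} 𝓐 id (fun _ => kappa δ x)
    fun _ _ => mem_image_of_mem _ (mem_singleton_self x)
  rw [hδ.singleton, zero_add] at h
  exact (hδ.mono subset_union_right).trans h

theorem kappa_memT (hδ : IsDiversity δ) (x : X) : MemT δ (kappa δ x) := by
  refine ⟨kappa_memP hδ x, fun g hg hgκ => funext fun A => le_antisymm (hgκ A) ?_⟩
  have hgx : g {x} = 0 := le_antisymm (kappa_self hδ x ▸ hgκ {x}) (hg.nonneg hδ.1 {x})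
  have h := hg.union_sup_le hδ.1 A {{x}} id
  rw [sup_singleton, sum_singleton, id, hgx, add_zero, union_comm, ← insert_eq] at h
  exact h

theorem kappa_injective (hδ : IsDiversity δ) : Function.Injective (kappa δ) := by
  intro x y h
  by_contra hxy
  have h0 : δ {x, y} = 0 := by
    have h := congrFun h {y}
    rwa [kappa_self hδ] at h
  have := (hδ.2.1 _).1 h0
  rw [card_pair hxy] at this
  omega

theorem forall_memP_image_kappa_union (hδ : IsDiversity δ) (A : Finset X)
    {W : Finset (Finset X → ℝ)} (hW : ∀ f ∈ W, MemP δ f) :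
    ∀ f ∈ A.image (kappa δ) ∪ W, MemP δ f := by
  intro f hf
  rcases mem_union.1 hf with hf | hf
  · obtain ⟨a, -, rfl⟩ := mem_image.1 hf
    exact kappa_memP hδ a
  · exact hW f hf

theorem exists_eval_eq_sInf {F : Finset (Finset X → ℝ)} (hF : F.Nonempty) (B : Finset X) :
    ∃ f ∈ F, f B = sInf ((fun f => f B) '' (F : Set (Finset X → ℝ))) := by
  obtain ⟨f, hf, h⟩ :=
    ((coe_nonempty.2 hF).image (fun f => f B)).csInf_mem (F.finite_toSet.image _)
  exact ⟨f, hf, h⟩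

theorem sInf_eval_le {F : Finset (Finset X → ℝ)} {f : Finset X → ℝ} (hf : f ∈ F) (B : Finset X) :
    sInf ((fun f => f B) '' (F : Set (Finset X → ℝ))) ≤ f B :=
  csInf_le (F.finite_toSet.image _).bddBelow ⟨f, hf, rfl⟩

theorem deltaT_le (hδ : IsDiversity δ) {F : Finset (Finset X → ℝ)} {c : ℝ}
    (h : ∀ (𝓐 : Finset (Finset X)) (m : Finset X → Finset X → ℝ),
      (∀ B ∈ 𝓐, m B ∈ F) → δ (𝓐.sup id) ≤ c + ∑ B ∈ 𝓐, m B B) :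
    deltaT δ F ≤ c := by
  have hc : 0 ≤ c := by simpa [hδ.empty] using h ∅ (fun _ => 0) (by simp)
  rw [deltaT]
  split_ifs with hF
  · exact hc
  choose m hmF hm using exists_eval_eq_sInf (nonempty_iff_ne_empty.2 hF)
  refine Real.sSup_le ?_ hc
  rintro _ ⟨𝓐, rfl⟩
  simp only [← hm]
  linarith [h 𝓐 m fun B _ => hmF B]

/-- Grouping `𝓐` by the function charged to each set, every group is attached to `x₀`
at cost `f {x₀}` once. -/
theorem sup_le_sum_eval_singleton_add_sum (hδ : IsDiversity δ) {F : Finset (Finset X → ℝ)}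
    (hF : ∀ f ∈ F, MemP δ f) (x₀ : X) (𝓐 : Finset (Finset X))
    (m : Finset X → Finset X → ℝ) (hm : ∀ B ∈ 𝓐, m B ∈ F) :
    δ (𝓐.sup id) ≤ ∑ f ∈ F, f {x₀} + ∑ B ∈ 𝓐, m B B := by
  have hmaps : ∀ B ∈ 𝓐, m B ∈ 𝓐.image m := fun B hB => mem_image_of_mem m hB
  have hsup : (𝓐.image m).sup (fun f => {B ∈ 𝓐 | m B = f}.sup id) = 𝓐.sup id := by
    rw [← sup_biUnion, biUnion_filter_eq_of_maps_to hmaps]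
  have hstar := hδ.union_sup_le {x₀} (𝓐.image m) (fun f => {B ∈ 𝓐 | m B = f}.sup id)
    (fun f => f {x₀} + ∑ B ∈ 𝓐 with m B = f, f B) fun f hf => ⟨x₀, mem_singleton_self _, by
      obtain ⟨B, hB, rfl⟩ := mem_image.1 hf
      rw [insert_eq]
      exact (hF _ (hm B hB)).union_sup_le hδ.1 {x₀} {B' ∈ 𝓐 | m B' = m B} id⟩
  have hfib : ∑ f ∈ 𝓐.image m, ∑ B ∈ 𝓐 with m B = f, f B = ∑ B ∈ 𝓐, m B B := by
    rw [← sum_fiberwise_of_maps_to hmaps]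
    exact sum_congr rfl fun f _ => sum_congr rfl fun B hB => by rw [(mem_filter.1 hB).2]
  have hsub : ∑ f ∈ 𝓐.image m, f {x₀} ≤ ∑ f ∈ F, f {x₀} :=
    sum_le_sum_of_subset_of_nonneg (image_subset_iff.2 hm) fun f hf _ => (hF f hf).nonneg hδ.1 _
  rw [hsup, hδ.singleton, zero_add, sum_add_distrib, hfib] at hstar
  linarith [hδ.mono (subset_union_right (s₁ := {x₀}) (s₂ := 𝓐.sup id))]

theorem sInf_eval_nonneg (hδ : IsDiversity δ) {F : Finset (Finset X → ℝ)}
    (hF : ∀ f ∈ F, MemP δ f) (hne : F.Nonempty) (B : Finset X) :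
    0 ≤ sInf ((fun f => f B) '' (F : Set (Finset X → ℝ))) := by
  obtain ⟨f, hf, hfB⟩ := exists_eval_eq_sInf hne B
  exact hfB ▸ (hF f hf).nonneg hδ.1 B

theorem bddAbove_deltaT_set (hδ : IsDiversity δ) {F : Finset (Finset X → ℝ)}
    (hF : ∀ f ∈ F, MemP δ f) (hne : F.Nonempty) :
    BddAbove {r : ℝ | ∃ 𝓐 : Finset (Finset X),
      r = δ (𝓐.sup id) - ∑ A ∈ 𝓐, sInf ((fun f => f A) '' (F : Set (Finset X → ℝ)))} := by
  rcases isEmpty_or_nonempty X with hX | ⟨⟨x₀⟩⟩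
  · refine ⟨0, ?_⟩
    rintro _ ⟨𝓐, rfl⟩
    rw [eq_empty_of_isEmpty (𝓐.sup id), hδ.empty]
    linarith [sum_nonneg fun A (_ : A ∈ 𝓐) => sInf_eval_nonneg hδ hF hne A]
  · refine ⟨∑ f ∈ F, f {x₀}, ?_⟩
    rintro _ ⟨𝓐, rfl⟩
    choose m hmF hm using exists_eval_eq_sInf hne
    have := sup_le_sum_eval_singleton_add_sum hδ hF x₀ 𝓐 m fun B _ => hmF B
    simp only [← hm]
    linarith

theorem le_deltaT (hδ : IsDiversity δ) {F : Finset (Finset X → ℝ)} (hF : ∀ f ∈ F, MemP δ f)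
    (V : Finset X) (hV : ∀ v ∈ V, kappa δ v ∈ F) {ι : Type*} (I : Finset ι)
    (C : ι → Finset X) (g : ι → Finset X → ℝ) (hg : ∀ i ∈ I, g i ∈ F) :
    δ (V ∪ I.sup C) - ∑ i ∈ I, g i (C i) ≤ deltaT δ F := by
  rcases F.eq_empty_or_nonempty with rfl | hne
  · obtain rfl : V = ∅ := eq_empty_of_forall_notMem fun v hv => by simpa using hV v hv
    obtain rfl : I = ∅ := eq_empty_of_forall_notMem fun i hi => by simpa using hg i hi
    simp [deltaT, hδ.empty]
  rw [deltaT, if_neg hne.ne_empty]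
  set inf : Finset X → ℝ := fun B => sInf ((fun f => f B) '' (F : Set (Finset X → ℝ)))
  have hinf_nonneg : ∀ B, 0 ≤ inf B := sInf_eval_nonneg hδ hF hne
  set 𝓐 := V.image singleton ∪ I.image C
  have hsup : 𝓐.sup id = V ∪ I.sup C := by
    rw [sup_union, sup_image, sup_image, Function.id_comp, Function.id_comp, sup_singleton_eq_self,
      sup_eq_union]
  have hV0 : ∑ A ∈ V.image singleton, inf A = 0 := sum_eq_zero fun A hA => by
    obtain ⟨v, hv, rfl⟩ := mem_image.1 hA
    exact le_antisymm (kappa_self hδ v ▸ sInf_eval_le (hV v hv) {v}) (hinf_nonneg _)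
  have hsum : ∑ A ∈ 𝓐, inf A ≤ ∑ i ∈ I, g i (C i) := by
    have hinter := sum_union_inter (s₁ := V.image singleton) (s₂ := I.image C) (f := inf)
    have himage := sum_image_le_of_nonneg (s := I) (g := C) fun A _ => hinf_nonneg A
    have hle : ∑ i ∈ I, inf (C i) ≤ ∑ i ∈ I, g i (C i) :=
      sum_le_sum fun i hi => sInf_eval_le (hg i hi) (C i)
    linarith [sum_nonneg fun A (_ : A ∈ V.image singleton ∩ I.image C) => hinf_nonneg A]
  have h𝓐 := le_csSup (bddAbove_deltaT_set hδ hF hne) (show δ (𝓐.sup id) - ∑ A ∈ 𝓐, inf A ∈ _ from ⟨𝓐, rfl⟩)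
  rw [hsup] at h𝓐
  linarith

end DeltaT

section DeltaTKappa

variable {X : Type*} {δ : Finset X → ℝ}

theorem deltaT_nonneg (hδ : IsDiversity δ) {F : Finset (Finset X → ℝ)}
    (hF : ∀ f ∈ F, MemP δ f) : 0 ≤ deltaT δ F := by
  simpa [hδ.empty] using
    le_deltaT hδ hF ∅ (by simp) (∅ : Finset Unit) (fun _ => ∅) (fun _ => 0) (by simp)

theorem deltaT_mono (hδ : IsDiversity δ) {F F' : Finset (Finset X → ℝ)} (hFF' : F ⊆ F')
    (hF' : ∀ f ∈ F', MemP δ f) : deltaT δ F ≤ deltaT δ F' :=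
  deltaT_le hδ fun 𝓐 m hm => by
    have := le_deltaT hδ hF' ∅ (by simp) 𝓐 id m fun B hB => hFF' (hm B hB)
    simp only [empty_union, id] at this
    linarith

/-- The sets charged to some `κ a` with `a ∈ A` can be absorbed into `A` by the star
inequality, so only the sets charged to `F` remain. -/
theorem deltaT_image_kappa_union_le (hδ : IsDiversity δ) {A : Finset X}
    {F : Finset (Finset X → ℝ)} {c : ℝ}
    (h : ∀ (𝓑 : Finset (Finset X)) (m : Finset X → Finset X → ℝ),
      (∀ B ∈ 𝓑, m B ∈ F) → δ (A ∪ 𝓑.sup id) ≤ c + ∑ B ∈ 𝓑, m B B) :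
    deltaT δ (A.image (kappa δ) ∪ F) ≤ c := by
  refine deltaT_le hδ fun 𝓑 m hm => ?_
  set 𝓑₁ := 𝓑.filter fun B => m B ∈ F
  set 𝓑₂ := 𝓑.filter fun B => m B ∉ F
  have hκ : ∀ B ∈ 𝓑₂, m B ∈ (A ∪ 𝓑₁.sup id).image (kappa δ) := fun B hB => by
    rw [mem_filter] at hB
    exact image_subset_image subset_union_left ((mem_union.1 (hm B hB.1)).resolve_right hB.2)
  have hsplit : 𝓑.sup id ⊆ (A ∪ 𝓑₁.sup id) ∪ 𝓑₂.sup id := by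
    rw [← filter_union_filter_not_eq (fun B => m B ∈ F) 𝓑, sup_union, sup_eq_union, union_assoc]
    exact subset_union_right
  calc δ (𝓑.sup id)
      ≤ δ (A ∪ 𝓑₁.sup id) + ∑ B ∈ 𝓑₂, m B B :=
        (hδ.mono hsplit).trans (hδ.union_sup_le_of_mem_image_kappa _ _ id m hκ)
    _ ≤ c + ∑ B ∈ 𝓑₁, m B B + ∑ B ∈ 𝓑₂, m B B := by
        gcongr
        exact h _ m fun B hB => (mem_filter.1 hB).2
    _ = c + ∑ B ∈ 𝓑, m B B := by rw [add_assoc, sum_filter_add_sum_filter_not]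

theorem exists_deltaT_image_kappa_union_le (hδ : IsDiversity δ) (A : Finset X)
    (F : Finset (Finset X → ℝ)) {ε : ℝ} (hε : 0 < ε) :
    ∃ (𝓑 : Finset (Finset X)) (m : Finset X → Finset X → ℝ), (∀ B ∈ 𝓑, m B ∈ F) ∧
      deltaT δ (A.image (kappa δ) ∪ F) ≤ δ (A ∪ 𝓑.sup id) - ∑ B ∈ 𝓑, m B B + ε := by
  by_contra! h
  have := deltaT_image_kappa_union_le hδ (c := deltaT δ (A.image (kappa δ) ∪ F) - ε)
    fun 𝓑 m hm => by linarith [h 𝓑 m hm]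
  linarith

theorem deltaT_image_kappa (hδ : IsDiversity δ) (A : Finset X) :
    deltaT δ (A.image (kappa δ)) = δ A := by
  refine le_antisymm ?_ ?_
  · simpa using deltaT_image_kappa_union_le hδ (A := A) (F := ∅) (c := δ A) fun 𝓑 m hm => by
      obtain rfl : 𝓑 = ∅ := eq_empty_of_forall_notMem fun B hB => by simpa using hm B hB
      simp
  · simpa using le_deltaT hδ (forall_memP_image_kappa_union hδ A (W := ∅) (by simp))
      A (fun v hv => by simpa using mem_image_of_mem (kappa δ) hv)
      (∅ : Finset Unit) (fun _ => ∅) (fun _ => 0) (by simp)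

theorem deltaT_insert_image_kappa (hδ : IsDiversity δ) {f : Finset X → ℝ} (hf : MemT δ f)
    (A : Finset X) : deltaT δ (insert f (A.image (kappa δ))) = f A := by
  rw [insert_eq, union_comm]
  have hP := forall_memP_image_kappa_union hδ A (W := {f}) (by simpa using hf.1)
  refine le_antisymm (deltaT_image_kappa_union_le hδ fun 𝓑 m hm => ?_) ?_
  · rw [sum_congr rfl fun B hB => by rw [mem_singleton.1 (hm B hB)]]
    exact hf.1.union_sup_le hδ.1 A 𝓑 id
  · refine le_of_forall_pos_le_add fun ε hε => ?_
    obtain ⟨𝓖, h𝓖⟩ := hf.exists_add_sum_le hδ.1 A hε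
    have := le_deltaT hδ hP A (fun v hv => mem_union_left _ (mem_image_of_mem _ hv)) 𝓖 id
      (fun _ => f) (fun _ _ => by simp)
    simp only [id] at this
    linarith

/-- `g (I.sup C)` is almost attained by some `𝓖` (tightness), and `𝓖` is charged to `g`. -/
theorem sub_sum_le_deltaT_insert (hδ : IsDiversity δ) {g : Finset X → ℝ} (hg : MemT δ g)
    {F : Finset (Finset X → ℝ)} (hF : ∀ f ∈ F, MemP δ f) {ι : Type*} (I : Finset ι)
    (C : ι → Finset X) (m : ι → Finset X → ℝ) (hm : ∀ i ∈ I, m i ∈ F) :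
    g (I.sup C) - ∑ i ∈ I, m i (C i) ≤ deltaT δ (insert g F) := by
  have hP : ∀ f ∈ insert g F, MemP δ f := (forall_mem_insert _ _ _).2 ⟨hg.1, hF⟩
  refine le_of_forall_pos_le_add fun ε hε => ?_
  obtain ⟨𝓖, h𝓖⟩ := hg.exists_add_sum_le hδ.1 (I.sup C) hε
  have := le_deltaT hδ hP ∅ (by simp) (I.disjSum 𝓖) (Sum.elim C id) (Sum.elim m fun _ => g)
    fun x hx => by
      rcases mem_disjSum.1 hx with ⟨i, hi, rfl⟩ | ⟨B, -, rfl⟩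
      · exact mem_insert_of_mem (hm i hi)
      · exact mem_insert_self g F
  simp only [empty_union, sup_disjSum, sum_disjSum, Sum.elim_inl, Sum.elim_inr, id_eq] at this
  change δ (I.sup C ∪ 𝓖.sup id) - _ ≤ _ at this
  linarith

theorem deltaT_union_le_add (hδ : IsDiversity δ) {g : Finset X → ℝ} (hg : MemT δ g)
    {F₁ F₂ : Finset (Finset X → ℝ)} (hF₁ : ∀ f ∈ F₁, MemP δ f) (hF₂ : ∀ f ∈ F₂, MemP δ f) :
    deltaT δ (F₁ ∪ F₂) ≤ deltaT δ (insert g F₁) + deltaT δ (insert g F₂) := by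
  refine deltaT_le hδ fun 𝓐 m hm => ?_
  set 𝓐₁ := {B ∈ 𝓐 | m B ∈ F₁}
  set 𝓐₂ := {B ∈ 𝓐 | m B ∉ F₁}
  have h₁ := sub_sum_le_deltaT_insert hδ hg hF₁ 𝓐₁ id m fun B hB => (mem_filter.1 hB).2
  have h₂ := le_deltaT hδ ((forall_mem_insert _ _ _).2 ⟨hg.1, hF₂⟩) ∅ (by simp)
    (({()} : Finset Unit).disjSum 𝓐₂) (Sum.elim (fun _ => 𝓐₁.sup id) id)
    (Sum.elim (fun _ => g) m) fun x hx => by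
      rcases mem_disjSum.1 hx with ⟨_, -, rfl⟩ | ⟨B, hB, rfl⟩
      · exact mem_insert_self g F₂
      · rw [mem_filter] at hB
        exact mem_insert_of_mem ((mem_union.1 (hm B hB.1)).resolve_left hB.2)
  have hsplit : 𝓐.sup id = 𝓐₁.sup id ∪ 𝓐₂.sup id := by
    rw [← sup_eq_union, ← sup_union, filter_union_filter_not_eq]
  simp only [empty_union, sup_disjSum, sum_disjSum, sup_singleton, sum_singleton,
    Sum.elim_inl, Sum.elim_inr, id_eq] at h₁ h₂
  change δ (𝓐₁.sup id ∪ 𝓐₂.sup id) - _ ≤ _ at h₂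
  rw [← hsplit] at h₂
  linarith [sum_filter_add_sum_filter_not 𝓐 (fun B => m B ∈ F₁) fun B => m B B]

/-- Peeling off one `C i` at a time with the triangle inequality through `g i`. -/
theorem deltaT_image_kappa_sup_union_le (hδ : IsDiversity δ) {ι : Type*} (I : Finset ι)
    (C : ι → Finset X) (g : ι → Finset X → ℝ) (hg : ∀ i ∈ I, MemT δ (g i))
    (W : Finset (Finset X → ℝ)) (hW : ∀ f ∈ W, MemP δ f) :
    deltaT δ ((I.sup C).image (kappa δ) ∪ W) ≤
      ∑ i ∈ I, g i (C i) + deltaT δ (I.image g ∪ W) := by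
  induction I using Finset.induction_on generalizing W with
  | empty => simp
  | insert i I hi ih =>
    have hgi := hg i (mem_insert_self i I)
    have hrest := forall_memP_image_kappa_union hδ (I.sup C) hW
    have htri := deltaT_union_le_add hδ hgi
      (forall_memP_image_kappa_union hδ (C i) (W := ∅) (by simp)) hrest
    rw [union_empty, deltaT_insert_image_kappa hδ hgi, ← union_insert] at htri
    have hih := ih (fun j hj => hg j (mem_insert_of_mem hj)) (insert (g i) W)
      ((forall_mem_insert _ _ _).2 ⟨hgi.1, hW⟩)
    rw [show I.image g ∪ insert (g i) W = insert (g i) (I.image g) ∪ W by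
      rw [union_insert, insert_union]] at hih
    rw [sup_insert, sup_eq_union, image_union, union_assoc, sum_insert hi, image_insert]
    linarith

end DeltaTKappa

section TightSpanOfTightSpan

variable {X : Type*} {δ : Finset X → ℝ}

/-- A structure rather than a subtype, so that the only `DecidableEq` instance on it is the
classical one that `MemP` uses. -/
structure TightSpan (δ : Finset X → ℝ) where
  val : Finset X → ℝ
  memT : MemT δ val

def tightSpanDelta (δ : Finset X → ℝ) (F : Finset (TightSpan δ)) : ℝ :=
  deltaT δ (F.image TightSpan.val)

def kappaT (hδ : IsDiversity δ) (x : X) : TightSpan δ := ⟨kappa δ x, kappa_memT hδ x⟩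

def restrictKappa (hδ : IsDiversity δ) (G : Finset (TightSpan δ) → ℝ) (A : Finset X) : ℝ :=
  G (A.image (kappaT hδ))

theorem forall_memP_image_val (F : Finset (TightSpan δ)) :
    ∀ f ∈ F.image TightSpan.val, MemP δ f := by
  intro f hf
  obtain ⟨t, -, rfl⟩ := mem_image.1 hf
  exact t.memT.1

theorem tightSpanDelta_nonneg (hδ : IsDiversity δ) (F : Finset (TightSpan δ)) :
    0 ≤ tightSpanDelta δ F :=
  deltaT_nonneg hδ (forall_memP_image_val F)

theorem image_val_image_kappaT (hδ : IsDiversity δ) (A : Finset X) :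
    (A.image (kappaT hδ)).image TightSpan.val = A.image (kappa δ) := by
  rw [image_image]
  rfl

theorem tightSpanDelta_image_kappaT (hδ : IsDiversity δ) (A : Finset X) :
    tightSpanDelta δ (A.image (kappaT hδ)) = δ A := by
  rw [tightSpanDelta, image_val_image_kappaT, deltaT_image_kappa hδ]

theorem memP_restrictKappa (hδ : IsDiversity δ) {G : Finset (TightSpan δ) → ℝ}
    (hG : MemP (tightSpanDelta δ) G) : MemP δ (restrictKappa hδ G) := by
  refine ⟨hG.1, fun 𝓐 => ?_⟩
  have h := hG.sup_le_sum (tightSpanDelta_nonneg hδ) 𝓐 fun A => A.image (kappaT hδ)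
  rwa [← image_sup_id, tightSpanDelta_image_kappaT] at h

/-- Witnesses of tightness of `G` at the pulled-back set are peeled off through the
tight functions `g i ∈ F`. -/
theorem restrictKappa_sup_le (hδ : IsDiversity δ) {G : Finset (TightSpan δ) → ℝ}
    (hG : MemT (tightSpanDelta δ) G) (F : Finset (TightSpan δ)) {ι : Type*} (I : Finset ι)
    (C : ι → Finset X) (g : ι → Finset X → ℝ) (hg : ∀ i ∈ I, g i ∈ F.image TightSpan.val) :
    restrictKappa hδ G (I.sup C) ≤ G F + ∑ i ∈ I, g i (C i) := by
  refine le_of_forall_pos_le_add fun ε hε => ?_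
  obtain ⟨𝓖, h𝓖⟩ :=
    hG.exists_add_sum_le (tightSpanDelta_nonneg hδ) ((I.sup C).image (kappaT hδ)) hε
  have hpeel := deltaT_image_kappa_sup_union_le hδ I C g (fun i hi => by
    obtain ⟨t, -, ht⟩ := mem_image.1 (hg i hi)
    exact ht ▸ t.memT) ((𝓖.sup id).image TightSpan.val) (forall_memP_image_val _)
  have hmono : deltaT δ (I.image g ∪ (𝓖.sup id).image TightSpan.val) ≤
      tightSpanDelta δ (F ∪ 𝓖.sup id) := by
    rw [tightSpanDelta, image_union]
    exact deltaT_mono hδ (union_subset_union (image_subset_iff.2 hg) subset_rfl)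
      (image_union (f := TightSpan.val) F (𝓖.sup id) ▸ forall_memP_image_val _)
  have hcov := hG.1.union_sup_le (tightSpanDelta_nonneg hδ) F 𝓖 id
  rw [tightSpanDelta, image_union, image_val_image_kappaT] at h𝓖
  have hG𝓖 : 0 ≤ ∑ B ∈ 𝓖, G B := sum_nonneg fun B _ => hG.1.nonneg (tightSpanDelta_nonneg hδ) B
  simp only [id] at hcov
  simp only [restrictKappa]
  linarith

theorem memT_restrictKappa (hδ : IsDiversity δ) {G : Finset (TightSpan δ) → ℝ}
    (hG : MemT (tightSpanDelta δ) G) : MemT δ (restrictKappa hδ G) := by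
  have hGnn : ∀ F, 0 ≤ G F := hG.1.nonneg (tightSpanDelta_nonneg hδ)
  refine memT_of_forall_exists_add_sum_le hδ.1 (memP_restrictKappa hδ hG.1) fun A ε hε => ?_
  obtain ⟨𝓕, h𝓕⟩ :=
    hG.exists_add_sum_le (tightSpanDelta_nonneg hδ) (A.image (kappaT hδ)) (half_pos hε)
  obtain ⟨𝓑, m, hm, h𝓑⟩ :=
    exists_deltaT_image_kappa_union_le hδ A ((𝓕.sup id).image TightSpan.val) (half_pos hε)
  have hsel : ∀ B ∈ 𝓑, ∃ F ∈ 𝓕, m B ∈ F.image TightSpan.val := fun B hB => by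
    obtain ⟨t, ht, htB⟩ := mem_image.1 (hm B hB)
    obtain ⟨F, hF, htF⟩ := mem_sup.1 ht
    exact ⟨F, hF, mem_image.2 ⟨t, htF, htB⟩⟩
  -- group `𝓑` by a member of `𝓕` containing the function each set is charged to
  choose! Fsel hFsel hmF using hsel
  set U : Finset (TightSpan δ) → Finset X := fun F => {B ∈ 𝓑 | Fsel B = F}.sup id
  have hU : ∀ F ∈ 𝓕, restrictKappa hδ G (U F) ≤ G F + ∑ B ∈ 𝓑 with Fsel B = F, m B B :=
    fun F _ => restrictKappa_sup_le hδ hG F _ id m fun B hB => by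
      obtain ⟨hB𝓑, rfl⟩ := mem_filter.1 hB
      exact hmF B hB𝓑
  have hsupU : (𝓕.image U).sup id = 𝓑.sup id := by
    rw [sup_image, Function.id_comp, ← sup_biUnion, biUnion_filter_eq_of_maps_to hFsel]
  rw [tightSpanDelta, image_union, image_val_image_kappaT] at h𝓕
  refine ⟨𝓕.image U, ?_⟩
  calc restrictKappa hδ G A + ∑ B ∈ 𝓕.image U, restrictKappa hδ G B
      ≤ restrictKappa hδ G A + ∑ F ∈ 𝓕, restrictKappa hδ G (U F) := by
        gcongr
        exact sum_image_le_of_nonneg fun _ _ => hGnn _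
    _ ≤ restrictKappa hδ G A + ∑ F ∈ 𝓕, (G F + ∑ B ∈ 𝓑 with Fsel B = F, m B B) := by
        gcongr with F hF
        exact hU F hF
    _ = G (A.image (kappaT hδ)) + ∑ F ∈ 𝓕, G F + ∑ B ∈ 𝓑, m B B := by
        rw [sum_add_distrib, sum_fiberwise_of_maps_to hFsel, add_assoc]
        rfl
    _ ≤ δ (A ∪ (𝓕.image U).sup id) + ε := by
        rw [hsupU]
        linarith

theorem deltaT_insert_restrictKappa_le (hδ : IsDiversity δ) {G : Finset (TightSpan δ) → ℝ}
    (hG : MemP (tightSpanDelta δ) G) (F : Finset (TightSpan δ)) :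
    deltaT δ (insert (restrictKappa hδ G) (F.image TightSpan.val)) ≤ G F := by
  set h := restrictKappa hδ G
  refine deltaT_le hδ fun 𝓑 m hm => ?_
  set 𝓑₁ := 𝓑.filter fun B => m B = h
  set 𝓑₂ := 𝓑.filter fun B => m B ≠ h
  have hle := le_deltaT hδ (forall_memP_image_kappa_union hδ (𝓑₁.sup id) (forall_memP_image_val F))
    (𝓑₁.sup id) (fun v hv => mem_union_left _ (mem_image_of_mem _ hv)) 𝓑₂ id m fun B hB => by
      rw [mem_filter] at hB
      exact mem_union_right _ ((mem_insert.1 (hm B hB.1)).resolve_left hB.2)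
  have hcov := hG.union_sup_le (tightSpanDelta_nonneg hδ) F 𝓑₁ fun B => B.image (kappaT hδ)
  rw [tightSpanDelta, image_union, ← image_sup_id, image_val_image_kappaT, union_comm] at hcov
  have hsum₁ : ∑ B ∈ 𝓑₁, G (B.image (kappaT hδ)) = ∑ B ∈ 𝓑₁, m B B :=
    sum_congr rfl fun B hB => by rw [(mem_filter.1 hB).2]; rfl
  have hsplit : 𝓑.sup id = 𝓑₁.sup id ∪ 𝓑₂.sup id := by
    rw [← sup_eq_union, ← sup_union, filter_union_filter_not_eq]
  simp only [id] at hle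
  rw [← hsplit] at hle
  linarith [sum_filter_add_sum_filter_not 𝓑 (fun B => m B = h) fun B => m B B]

end TightSpanOfTightSpan

section Hyperconvex

variable {X : Type*} {δ : Finset X → ℝ}

theorem DivHyperconvex.exists_kappa_eq (H : DivHyperconvex δ) (hδ : IsDiversity δ)
    {g : Finset X → ℝ} (hg : MemT δ g) : ∃ x, kappa δ x = g := by
  obtain ⟨z, hz⟩ := H g hg.1.2
  refine ⟨z, hg.2 _ (kappa_memP hδ z) fun A => ?_⟩
  rw [kappa, insert_eq]
  exact hz A

theorem divHyperconvex_tightSpanDelta (hδ : IsDiversity δ) :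
    DivHyperconvex (tightSpanDelta δ) := by
  intro R hR
  obtain ⟨G, hGT, hGR⟩ := exists_memT_le (memP_update_empty hR)
  set h : TightSpan δ := ⟨restrictKappa hδ G, memT_restrictKappa hδ hGT⟩
  refine ⟨h, fun F => ?_⟩
  have hR0 : 0 ≤ R ∅ := (tightSpanDelta_nonneg hδ _).trans (by simpa using hR {∅})
  calc tightSpanDelta δ ({h} ∪ F) = deltaT δ (insert h.val (F.image TightSpan.val)) := by
        rw [tightSpanDelta, ← insert_eq, image_insert]
    _ ≤ G F := deltaT_insert_restrictKappa_le hδ hGT.1 F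
    _ ≤ Function.update R ∅ 0 F := hGR F
    _ ≤ R F := by
        rcases eq_or_ne F ∅ with rfl | hF
        · simpa using hR0
        · rw [Function.update_of_ne hF]

theorem DivHyperconvex.of_equiv {Y : Type*} {b : Finset Y → ℝ} (hb : DivHyperconvex b)
    (e : X ≃ Y) (he : ∀ A, b (A.image e) = δ A) : DivHyperconvex δ := by
  intro r hr
  have himage : ∀ F : Finset Y, (F.image e.symm).image e = F := fun F => by
    rw [image_image, e.self_comp_symm, image_id]
  obtain ⟨z, hz⟩ := hb (fun F => r (F.image e.symm)) fun 𝓕 => by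
    calc b (𝓕.sup id) = δ ((𝓕.image fun F => F.image e.symm).sup id) := by
          rw [← he, sup_image, Function.id_comp, ← image_sup_id, himage]
      _ ≤ ∑ A ∈ 𝓕.image fun F => F.image e.symm, r A := hr _
      _ = ∑ F ∈ 𝓕, r (F.image e.symm) :=
          sum_image fun _ _ _ _ h => image_injective e.symm.injective h
  refine ⟨e.symm z, fun A => ?_⟩
  have h := hz (A.image e)
  rwa [image_image, e.symm_comp_self, image_id, ← himage ({z} ∪ A.image e), image_union,
    image_singleton, image_image, e.symm_comp_self, image_id, he] at h

end Hyperconvex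

/-- `(X, δ)` is hyperconvex iff there is an isomorphism (a surjective
embedding) from `(X, δ)` onto its tight span `(T_X, δ_T)`. -/
theorem hyperconvex_iff_isomorphic_tightSpan {X : Type*}
    (δ : Finset X → ℝ) (hδ : IsDiversity δ) :
    DivHyperconvex δ ↔
      ∃ φ : X → (Finset X → ℝ),
        (∀ x : X, MemT δ (φ x)) ∧
        Function.Injective φ ∧
        (∀ A : Finset X, deltaT δ (A.image φ) = δ A) ∧
        (∀ g : Finset X → ℝ, MemT δ g → ∃ x : X, φ x = g) := by
  constructor
  · exact fun H => ⟨kappa δ, kappa_memT hδ, kappa_injective hδ, deltaT_image_kappa hδ,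
      fun g hg => H.exists_kappa_eq hδ hg⟩
  · rintro ⟨φ, hφT, hφinj, hφδ, hφsurj⟩
    let e : X ≃ TightSpan δ := Equiv.ofBijective (fun x => ⟨φ x, hφT x⟩)
      ⟨fun x y h => hφinj (congrArg TightSpan.val h), fun ⟨g, hg⟩ => by
        obtain ⟨x, rfl⟩ := hφsurj g hg
        exact ⟨x, rfl⟩⟩
    refine (divHyperconvex_tightSpanDelta hδ).of_equiv e fun A => ?_
    rw [tightSpanDelta, image_image]
    exact hφδ A

end
end

section
/- A metric space (X, d) is hyperconvex if and only if its diameter diversity (X, diam_d) is a hyperconvex diversity. -/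
open scoped Classical

noncomputable section

/-- The diameter diversity of a metric space. -/
noncomputable def diamDiv (X : Type*) [MetricSpace X] : Finset X → ℝ :=
  fun A => Metric.diam (A : Set X)

/-- A hyperconvex metric space. -/
def MetricHyperconvex (X : Type*) [MetricSpace X] : Prop :=
  ∀ r : X → ℝ, (∀ x y : X, dist x y ≤ r x + r y) → ∃ z : X, ∀ x : X, dist z x ≤ r x

/-! Admissible radius functions on points and on finite sets translate into each other.
From `R` on finite sets take `r x = inf {R Y | x ∈ Y}`; it is admissible for `d` because
`diam (Y ∪ Z) ≤ R Y + R Z`. From `r` on points take `R Y = ∑ y ∈ Y, r y`; it is admissible for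
`diam` since two distinct points `x, y` of `⋃ 𝓐` give `d(x, y) ≤ r x + r y ≤ ∑ A ∈ 𝓐, R A`.
In both directions a centre for the translated radii is a centre for the original ones. -/

open Finset

section

variable {X : Type*} [MetricSpace X]

lemma dist_le_diamDiv {A : Finset X} {x y : X} (hx : x ∈ A) (hy : y ∈ A) :
    dist x y ≤ diamDiv X A :=
  Metric.dist_le_diam_of_mem A.finite_toSet.isBounded hx hy

lemma diamDiv_le_of_forall_dist_le {A : Finset X} {C : ℝ} (hC : 0 ≤ C)
    (h : ∀ x ∈ A, ∀ y ∈ A, dist x y ≤ C) : diamDiv X A ≤ C :=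
  Metric.diam_le_of_forall_dist_le hC h

def pointRadius (r : Finset X → ℝ) (x : X) : ℝ :=
  ⨅ Y : {Y : Finset X // x ∈ Y}, r Y

section DiversityToMetric

variable {r : Finset X → ℝ} (hr : ∀ 𝓐 : Finset (Finset X), diamDiv X (𝓐.sup id) ≤ ∑ A ∈ 𝓐, r A)
include hr

lemma diamDiv_le_of_admissible (Y : Finset X) : diamDiv X Y ≤ r Y := by
  simpa using hr {Y}

lemma nonneg_of_admissible (Y : Finset X) : 0 ≤ r Y :=
  Metric.diam_nonneg.trans (diamDiv_le_of_admissible hr Y)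

lemma diamDiv_union_le_of_admissible (Y Z : Finset X) : diamDiv X (Y ∪ Z) ≤ r Y + r Z := by
  by_cases hYZ : Y = Z
  · subst hYZ
    rw [union_self]
    exact le_add_of_le_of_nonneg (diamDiv_le_of_admissible hr Y) (nonneg_of_admissible hr Y)
  · simpa [sum_pair hYZ] using hr {Y, Z}

lemma pointRadius_le {x : X} {Y : Finset X} (hx : x ∈ Y) : pointRadius r x ≤ r Y :=
  ciInf_le ⟨0, by rintro _ ⟨Z, rfl⟩; exact nonneg_of_admissible hr Z⟩ (⟨Y, hx⟩ : {Y // x ∈ Y})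

lemma dist_le_pointRadius_add (x y : X) : dist x y ≤ pointRadius r x + pointRadius r y := by
  have (x : X) : Nonempty {Y : Finset X // x ∈ Y} := ⟨⟨{x}, mem_singleton_self x⟩⟩
  refine le_ciInf_add_ciInf fun Y Z => ?_
  exact (dist_le_diamDiv (mem_union_left _ Y.2) (mem_union_right _ Z.2)).trans
    (diamDiv_union_le_of_admissible hr Y Z)

lemma diamDiv_insert_le_of_admissible {z : X} (hz : ∀ x, dist z x ≤ pointRadius r x)
    (Y : Finset X) : diamDiv X ({z} ∪ Y) ≤ r Y := by
  have hzY : ∀ y ∈ Y, dist z y ≤ r Y := fun y hy => (hz y).trans (pointRadius_le hr hy)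
  refine diamDiv_le_of_forall_dist_le (nonneg_of_admissible hr Y) ?_
  simp only [singleton_union, mem_insert, forall_eq_or_imp, dist_self]
  refine ⟨⟨nonneg_of_admissible hr Y, hzY⟩, fun a ha => ⟨?_, fun b hb => ?_⟩⟩
  · exact dist_comm a z ▸ hzY a ha
  · exact (dist_le_diamDiv ha hb).trans (diamDiv_le_of_admissible hr Y)

end DiversityToMetric

section MetricToDiversity

variable {r : X → ℝ} (hr : ∀ x y : X, dist x y ≤ r x + r y)
include hr

lemma nonneg_of_dist_le_add (x : X) : 0 ≤ r x := by
  linarith [hr x x, dist_self x]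

lemma diamDiv_le_sum (A : Finset X) : diamDiv X A ≤ ∑ a ∈ A, r a := by
  have hr0 := nonneg_of_dist_le_add hr
  refine diamDiv_le_of_forall_dist_le (sum_nonneg fun a _ => hr0 a) fun x hx y hy => ?_
  by_cases hxy : x = y
  · subst hxy
    simpa using sum_nonneg fun a _ => hr0 a
  · calc dist x y ≤ r x + r y := hr x y
      _ = ∑ a ∈ {x, y}, r a := (sum_pair hxy).symm
      _ ≤ ∑ a ∈ A, r a :=
        sum_le_sum_of_subset_of_nonneg (insert_subset hx (singleton_subset_iff.2 hy))
          fun a _ _ => hr0 a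

lemma diamDiv_sup_le_sum_sum (𝓐 : Finset (Finset X)) :
    diamDiv X (𝓐.sup id) ≤ ∑ A ∈ 𝓐, ∑ a ∈ A, r a := by
  have hr0 := nonneg_of_dist_le_add hr
  refine (diamDiv_le_sum hr _).trans
    (apply_sup_le_sum (f := fun A => ∑ a ∈ A, r a) sum_empty (fun {s t} => ?_) 𝓐)
  have := sum_union_inter (s₁ := s) (s₂ := t) (f := r)
  rw [sup_eq_union]
  linarith [sum_nonneg fun a (_ : a ∈ s ∩ t) => hr0 a]

end MetricToDiversity

end

/-- a metric space is hyperconvex iff its diameter diversity is a hyperconvex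
diversity. -/
theorem metric_hyperconvex_iff_diamDiv_hyperconvex (X : Type*) [MetricSpace X] :
    MetricHyperconvex X ↔ DivHyperconvex (diamDiv X) := by
  constructor
  · intro hX r hr
    obtain ⟨z, hz⟩ := hX (pointRadius r) (dist_le_pointRadius_add hr)
    exact ⟨z, diamDiv_insert_le_of_admissible hr hz⟩
  · intro hD r hr
    obtain ⟨z, hz⟩ := hD (fun Y => ∑ y ∈ Y, r y) (diamDiv_sup_le_sum_sum hr)
    refine ⟨z, fun x => ?_⟩
    simpa using (dist_le_diamDiv (mem_union_left _ (mem_singleton_self z))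
      (mem_union_right _ (mem_singleton_self x))).trans (hz {x})

end
end

section
/- Let (𝓧, d) be a real tree and let μ be the one-dimensional Hausdorff measure on 𝓧. Define δ_t(A) = μ(conv(A)) for finite A ⊆ 𝓧, where conv(A) = ⋃_{a,b ∈ A} [a, b] is the union of the geodesic segments between pairs of points of A. Then (𝓧, δ_t) is a diversity: δ_t(A) ≥ 0 with δ_t(A) = 0 if and only if |A| ≤ 1, and δ_t(A ∪ C) ≤ δ_t(A ∪ B) + δ_t(B ∪ C) for all finite A, B, C ⊆ 𝓧 with B ≠ ∅. -/
open scoped Classical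
open MeasureTheory

noncomputable section

/-- `s` is a geodesic segment joining `x` and `y`: the image of an isometric
parametrisation `c : [0, d(x,y)] → 𝓧` with `c 0 = x` and `c (d(x,y)) = y`. -/
def IsGeodesicSegment {T : Type*} [MetricSpace T] (x y : T) (s : Set T) : Prop :=
  ∃ c : ℝ → T, c 0 = x ∧ c (dist x y) = y ∧
    (∀ u ∈ Set.Icc (0 : ℝ) (dist x y), ∀ v ∈ Set.Icc (0 : ℝ) (dist x y),
      dist (c u) (c v) = |u - v|) ∧
    s = c '' Set.Icc (0 : ℝ) (dist x y)

/-- A real tree: each pair of points is joined by a unique geodesic segment, and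
if `[y,x] ∩ [x,z] = {x}` then `[y,x] ∪ [x,z] = [y,z]`. -/
def IsRealTree (T : Type*) [MetricSpace T] : Prop :=
  (∀ x y : T, ∃! s : Set T, IsGeodesicSegment x y s) ∧
  (∀ x y z : T, ∀ syx sxz syz : Set T,
    IsGeodesicSegment y x syx → IsGeodesicSegment x z sxz → IsGeodesicSegment y z syz →
    syx ∩ sxz = {x} → syx ∪ sxz = syz)

/-- The real-tree diversity: `δ_t A = μ (conv A)` where `conv A` is the union of the
geodesic segments `[a, b]` for `a, b ∈ A` and `μ` is the one-dimensional Hausdorff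
measure. -/
noncomputable def treeDiv {T : Type*} [MetricSpace T] [MeasurableSpace T] [BorelSpace T]
    (seg : T → T → Set T) : Finset T → ℝ :=
  fun A => (μH[1] (⋃ a ∈ A, ⋃ b ∈ A, seg a b)).toReal
/-! A geodesic segment has Hausdorff measure equal to its length, so `δ_t(A)` is finite and
vanishes exactly when `A` has at most one point. For the triangle inequality pick `b ∈ B`: in a
real tree `[x, y] ⊆ [x, b] ∪ [b, y]`, which puts `conv(A ∪ C)` inside
`conv(A ∪ B) ∪ conv(B ∪ C)`, and μ is subadditive. This tripod inclusion comes from following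
`[a, b]` and `[a, c]` out of `a` up to the last time `t₀` at which they agree: past `t₀` the two
branches meet only at their common point, so by axiom (b) together they form `[b, c]`. -/

open Set

section Geodesic

variable {T : Type*} [MetricSpace T]

def IsGeodesicOn (c : ℝ → T) (s : Set ℝ) : Prop :=
  ∀ u ∈ s, ∀ v ∈ s, dist (c u) (c v) = |u - v|

namespace IsGeodesicOn

variable {c : ℝ → T} {s s' : Set ℝ}

theorem mono (h : IsGeodesicOn c s) (hs' : s' ⊆ s) : IsGeodesicOn c s' :=
  fun u hu v hv => h u (hs' hu) v (hs' hv)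

theorem dist_eq_sub (h : IsGeodesicOn c s) {u v : ℝ} (hu : u ∈ s) (hv : v ∈ s) (huv : u ≤ v) :
    dist (c u) (c v) = v - u := by
  rw [h u hu v hv, abs_sub_comm, abs_of_nonneg (sub_nonneg.mpr huv)]

theorem dist_apply_zero {r u : ℝ} (h : IsGeodesicOn c (Icc 0 r)) (hu : u ∈ Icc 0 r) :
    dist (c 0) (c u) = u := by
  rw [h.dist_eq_sub ⟨le_rfl, hu.1.trans hu.2⟩ hu hu.1, sub_zero]

theorem continuousOn (h : IsGeodesicOn c s) : ContinuousOn c s :=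
  (LipschitzOnWith.of_dist_le_mul (K := 1) fun u hu v hv => by
    rw [h u hu v hv, NNReal.coe_one, one_mul, Real.dist_eq]).continuousOn

theorem isGeodesicSegment_image {u v : ℝ} (h : IsGeodesicOn c (Icc u v)) (huv : u ≤ v) :
    IsGeodesicSegment (c u) (c v) (c '' Icc u v) := by
  have hdist : dist (c u) (c v) = v - u :=
    h.dist_eq_sub (left_mem_Icc.2 huv) (right_mem_Icc.2 huv) huv
  refine ⟨fun w => c (u + w), by simp, by simp [hdist], fun w hw w' hw' => ?_, ?_⟩
  · rw [hdist] at hw hw'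
    rw [h _ ⟨by linarith [hw.1], by linarith [hw.2]⟩ _ ⟨by linarith [hw'.1], by linarith [hw'.2]⟩,
      add_sub_add_left_eq_sub]
  · rw [hdist, ← image_image c (u + ·), image_const_add_Icc, add_zero, add_sub_cancel]

end IsGeodesicOn

theorem IsGeodesicSegment.symm {x y : T} {s : Set T} (h : IsGeodesicSegment x y s) :
    IsGeodesicSegment y x s := by
  obtain ⟨c, hx, hy, hc, rfl⟩ := h
  unfold IsGeodesicSegment
  rw [dist_comm y x]
  refine ⟨fun w => c (dist x y - w), by simpa using hy, by simpa using hx,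
    fun w hw w' hw' => ?_, ?_⟩
  · rw [hc _ ⟨by linarith [hw.2], by linarith [hw.1]⟩ _ ⟨by linarith [hw'.2], by linarith [hw'.1]⟩,
      sub_sub_sub_cancel_left, abs_sub_comm]
  · rw [← image_image c (dist x y - ·), image_const_sub_Icc, sub_zero, sub_self]

theorem hausdorffMeasure_image_of_dist_eq {X Y : Type*} [MetricSpace X] [MetricSpace Y]
    [MeasurableSpace X] [BorelSpace X] [MeasurableSpace Y] [BorelSpace Y] {f : X → Y}
    {s : Set X} (hf : ∀ x ∈ s, ∀ y ∈ s, dist (f x) (f y) = dist x y) {d : ℝ} (hd : 0 ≤ d) :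
    μH[d] (f '' s) = μH[d] s := by
  have hiso : Isometry (s.domRestrict f) := Isometry.of_dist_eq fun x y => hf x x.2 y y.2
  rw [← range_domRestrict, ← image_univ, hiso.hausdorffMeasure_image (Or.inl hd),
    ← isometry_subtype_coe.hausdorffMeasure_image (Or.inl hd), image_univ, Subtype.range_coe]

end Geodesic

section RealTree

variable {T : Type*} [MetricSpace T]

theorem IsGeodesicSegment.hausdorffMeasure_eq [MeasurableSpace T] [BorelSpace T] {x y : T}
    {s : Set T} (h : IsGeodesicSegment x y s) : μH[1] s = ENNReal.ofReal (dist x y) := by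
  obtain ⟨c, -, -, hc, rfl⟩ := h
  rw [hausdorffMeasure_image_of_dist_eq
    (fun u hu v hv => (hc u hu v hv).trans (Real.dist_eq u v).symm) zero_le_one,
    hausdorffMeasure_real, Real.volume_Icc, sub_zero]

namespace IsRealTree

theorem eqOn_of_apply_eq (htree : IsRealTree T) {c₁ c₂ : ℝ → T} {t : ℝ}
    (h₁ : IsGeodesicOn c₁ (Icc 0 t)) (h₂ : IsGeodesicOn c₂ (Icc 0 t)) (h₀ : c₁ 0 = c₂ 0)
    (ht : c₁ t = c₂ t) : EqOn c₁ c₂ (Icc 0 t) := by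
  intro u hu
  have hseg₁ := h₁.isGeodesicSegment_image (hu.1.trans hu.2)
  have hseg₂ := h₂.isGeodesicSegment_image (hu.1.trans hu.2)
  rw [← h₀, ← ht] at hseg₂
  obtain ⟨v, hv, huv⟩ : c₁ u ∈ c₂ '' Icc 0 t :=
    (htree.1 _ _).unique hseg₁ hseg₂ ▸ mem_image_of_mem c₁ hu
  obtain rfl : u = v := by rw [← h₁.dist_apply_zero hu, ← h₂.dist_apply_zero hv, h₀, huv]
  exact huv.symm

theorem segment_subset_union (htree : IsRealTree T) {seg : T → T → Set T}
    (hseg : ∀ x y, IsGeodesicSegment x y (seg x y)) (a b c : T) :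
    seg a c ⊆ seg a b ∪ seg b c := by
  obtain ⟨c₁, h₁a, h₁b, (h₁ : IsGeodesicOn c₁ _), h₁seg⟩ := hseg a b
  obtain ⟨c₂, h₂a, h₂c, (h₂ : IsGeodesicOn c₂ _), h₂seg⟩ := hseg a c
  obtain ⟨t₀, ⟨⟨ht₀, ht₀r⟩, hm⟩, hmax⟩ :
      ∃ t₀, IsGreatest {t ∈ Icc 0 (min (dist a b) (dist a c)) | c₁ t = c₂ t} t₀ := by
    refine IsCompact.exists_isGreatest ?_
      ⟨0, ⟨le_rfl, le_min dist_nonneg dist_nonneg⟩, h₁a.trans h₂a.symm⟩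
    exact isCompact_Icc.of_isClosed_subset (isClosed_Icc.isClosed_eq
      (h₁.continuousOn.mono (Icc_subset_Icc_right (min_le_left _ _)))
      (h₂.continuousOn.mono (Icc_subset_Icc_right (min_le_right _ _)))) (sep_subset _ _)
  have ht₀₁ : t₀ ≤ dist a b := ht₀r.trans (min_le_left _ _)
  have ht₀₂ : t₀ ≤ dist a c := ht₀r.trans (min_le_right _ _)
  have hagree : EqOn c₁ c₂ (Icc 0 t₀) :=
    htree.eqOn_of_apply_eq (h₁.mono (Icc_subset_Icc_right ht₀₁))
      (h₂.mono (Icc_subset_Icc_right ht₀₂)) (h₁a.trans h₂a.symm) hm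
  have hbm : IsGeodesicSegment b (c₁ t₀) (c₁ '' Icc t₀ (dist a b)) := by
    simpa only [h₁b] using
      ((h₁.mono (Icc_subset_Icc_left ht₀)).isGeodesicSegment_image ht₀₁).symm
  have hmc : IsGeodesicSegment (c₁ t₀) c (c₂ '' Icc t₀ (dist a c)) := by
    simpa only [hm, h₂c] using (h₂.mono (Icc_subset_Icc_left ht₀)).isGeodesicSegment_image ht₀₂
  have hmeet : c₁ '' Icc t₀ (dist a b) ∩ c₂ '' Icc t₀ (dist a c) = {c₁ t₀} := by
    refine subset_antisymm ?_ (singleton_subset_iff.2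
      ⟨⟨t₀, ⟨le_rfl, ht₀₁⟩, rfl⟩, t₀, ⟨le_rfl, ht₀₂⟩, hm.symm⟩)
    rintro _ ⟨⟨u, hu, rfl⟩, v, hv, hvu⟩
    have hu' : u ∈ Icc 0 (dist a b) := ⟨ht₀.trans hu.1, hu.2⟩
    have hv' : v ∈ Icc 0 (dist a c) := ⟨ht₀.trans hv.1, hv.2⟩
    obtain rfl : u = v := by
      rw [← h₁.dist_apply_zero hu', ← h₂.dist_apply_zero hv', h₁a, h₂a, hvu]
    rw [le_antisymm (hmax ⟨⟨hu'.1, le_min hu'.2 hv'.2⟩, hvu.symm⟩) hu.1, mem_singleton_iff]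
  have hbc := htree.2 _ _ _ _ _ _ hbm hmc (hseg b c) hmeet
  rw [h₂seg]
  rintro _ ⟨u, hu, rfl⟩
  rcases le_total u t₀ with hut | htu
  · left
    rw [h₁seg]
    exact ⟨u, ⟨hu.1, hut.trans ht₀₁⟩, hagree ⟨hu.1, hut⟩⟩
  · right
    rw [← hbc]
    exact Or.inr ⟨u, ⟨htu, hu.2⟩, rfl⟩

end IsRealTree

end RealTree

section SegmentHull

variable {T : Type*}

-- The paper's `conv A`.
def segmentHull (seg : T → T → Set T) (A : Finset T) : Set T :=
  ⋃ a ∈ A, ⋃ b ∈ A, seg a b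

variable {seg : T → T → Set T}

theorem segment_subset_segmentHull {A : Finset T} {a b : T} (ha : a ∈ A) (hb : b ∈ A) :
    seg a b ⊆ segmentHull seg A :=
  fun _ hp => mem_biUnion ha (mem_biUnion hb hp)

variable [MetricSpace T]

theorem segmentHull_union_subset (htree : IsRealTree T)
    (hseg : ∀ x y, IsGeodesicSegment x y (seg x y)) {A B C : Finset T} {b : T} (hb : b ∈ B) :
    segmentHull seg (A ∪ C) ⊆ segmentHull seg (A ∪ B) ∪ segmentHull seg (B ∪ C) := by
  have hspoke : ∀ x ∈ A ∪ C,
      seg x b ∪ seg b x ⊆ segmentHull seg (A ∪ B) ∪ segmentHull seg (B ∪ C) := by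
    intro x hx
    rcases Finset.mem_union.1 hx with hx | hx
    · exact (union_subset (segment_subset_segmentHull (Finset.mem_union_left _ hx)
        (Finset.mem_union_right _ hb)) (segment_subset_segmentHull (Finset.mem_union_right _ hb)
        (Finset.mem_union_left _ hx))).trans subset_union_left
    · exact (union_subset (segment_subset_segmentHull (Finset.mem_union_right _ hx)
        (Finset.mem_union_left _ hb)) (segment_subset_segmentHull (Finset.mem_union_left _ hb)
        (Finset.mem_union_right _ hx))).trans subset_union_right
  exact iUnion₂_subset fun x hx => iUnion₂_subset fun y hy =>
    (htree.segment_subset_union hseg x b y).trans <|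
      union_subset (subset_union_left.trans (hspoke x hx)) (subset_union_right.trans (hspoke y hy))

variable [MeasurableSpace T] [BorelSpace T]

theorem hausdorffMeasure_segmentHull_le (hseg : ∀ x y, IsGeodesicSegment x y (seg x y))
    (A : Finset T) :
    μH[1] (segmentHull seg A) ≤ ∑ a ∈ A, ∑ b ∈ A, ENNReal.ofReal (dist a b) := by
  refine (measure_biUnion_finset_le _ _).trans (Finset.sum_le_sum fun a _ => ?_)
  refine (measure_biUnion_finset_le _ _).trans (Finset.sum_le_sum fun b _ => ?_)
  rw [(hseg a b).hausdorffMeasure_eq]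

theorem hausdorffMeasure_segmentHull_ne_top (hseg : ∀ x y, IsGeodesicSegment x y (seg x y))
    (A : Finset T) : μH[1] (segmentHull seg A) ≠ ⊤ :=
  ne_top_of_le_ne_top (ENNReal.sum_ne_top.2 fun _ _ => ENNReal.sum_ne_top.2 fun _ _ =>
    ENNReal.ofReal_ne_top) (hausdorffMeasure_segmentHull_le hseg A)

theorem hausdorffMeasure_segmentHull_eq_zero_iff
    (hseg : ∀ x y, IsGeodesicSegment x y (seg x y)) {A : Finset T} :
    μH[1] (segmentHull seg A) = 0 ↔ A.card ≤ 1 := by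
  constructor
  · intro h
    by_contra! hA
    obtain ⟨a, ha, b, hb, hab⟩ := Finset.one_lt_card.1 hA
    have hle : ENNReal.ofReal (dist a b) ≤ μH[1] (segmentHull seg A) :=
      (hseg a b).hausdorffMeasure_eq ▸ measure_mono (segment_subset_segmentHull ha hb)
    rw [h, nonpos_iff_eq_zero, ENNReal.ofReal_eq_zero, dist_le_zero] at hle
    exact hab hle
  · intro hA
    refine nonpos_iff_eq_zero.1 ((hausdorffMeasure_segmentHull_le hseg A).trans_eq ?_)
    refine Finset.sum_eq_zero fun a ha => Finset.sum_eq_zero fun b hb => ?_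
    rw [Finset.card_le_one.1 hA a ha b hb, dist_self, ENNReal.ofReal_zero]

end SegmentHull

/-- for a real tree `(𝓧, d)` with geodesic segments `seg x y = [x, y]`,
the function `δ_t(A) = μ(conv A)` is a diversity. -/
theorem treeDiv_is_diversity {T : Type*} [MetricSpace T] [MeasurableSpace T] [BorelSpace T]
    (htree : IsRealTree T)
    (seg : T → T → Set T) (hseg : ∀ x y : T, IsGeodesicSegment x y (seg x y)) :
    IsDiversity (treeDiv seg) := by
  have hfin := hausdorffMeasure_segmentHull_ne_top hseg
  refine ⟨fun A => ENNReal.toReal_nonneg, fun A => ?_, fun A B C hB => ?_⟩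
  · change (μH[1] (segmentHull seg A)).toReal = 0 ↔ _
    rw [ENNReal.toReal_eq_zero_iff, or_iff_left (hfin A),
      hausdorffMeasure_segmentHull_eq_zero_iff hseg]
  · obtain ⟨b, hb⟩ := Finset.nonempty_iff_ne_empty.2 hB
    calc treeDiv seg (A ∪ C)
        ≤ (μH[1] (segmentHull seg (A ∪ B)) + μH[1] (segmentHull seg (B ∪ C))).toReal :=
          ENNReal.toReal_mono (ENNReal.add_ne_top.2 ⟨hfin _, hfin _⟩) <|
            (measure_mono (segmentHull_union_subset htree hseg hb)).trans (measure_union_le _ _)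
      _ = treeDiv seg (A ∪ B) + treeDiv seg (B ∪ C) := ENNReal.toReal_add (hfin _) (hfin _)
end
end
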